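/- Let τ be a real constant and consider the SUPG-stabilised compatible finite element vorticity scheme: u : ℝ → V₁ continuously differentiable with ∇·u(t) ≡ 0 for every t, ω : ℝ → V₀ continuously differentiable with ⟨γ, ω(t)⟩ = −⟨∇^⊥γ, u(t)⟩ for all γ ∈ V₀ and all t, satisfying ⟨w, ∂u/∂t⟩ + ∫_{ℝ²} (ω − τ(∂ω/∂t + u·∇ω)) (w·u^⊥) dx = 0 for every t and every w ∈ V₁ with ∇·w ≡ 0. Then the energy ∫_{ℝ²} |u(t)|² dx is constant in t, while the enstrophy satisfies the budget identity d/dt ∫_{ℝ²} ½ ω² dx = −τ ∫_{ℝ²} (∂ω/∂t)(u·∇ω) dx − τ ∫_{ℝ²} (u·∇ω)² dx. -/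

import Mathlib

open MeasureTheory

/-- Partial derivative `∂f/∂xᵢ` of a scalar function on `ℝ²`. -/
noncomputable def pd2 (i : Fin 2) (f : (Fin 2 → ℝ) → ℝ) (x : Fin 2 → ℝ) : ℝ :=
  fderiv ℝ f x (Pi.single i 1)

/-- Euclidean dot product on `ℝ²`. -/
def dot2 (a b : Fin 2 → ℝ) : ℝ := a 0 * b 0 + a 1 * b 1

/-- `a^⊥ = (−a₂, a₁)`. -/
def perp2 (a : Fin 2 → ℝ) : Fin 2 → ℝ := ![-(a 1), a 0]

/-- `∇^⊥γ = (−∂γ/∂x₂, ∂γ/∂x₁)`. -/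
noncomputable def gradPerp2 (γ : (Fin 2 → ℝ) → ℝ) (x : Fin 2 → ℝ) : Fin 2 → ℝ :=
  ![-(pd2 1 γ x), pd2 0 γ x]

/-- Gradient `∇γ`. -/
noncomputable def grad2 (γ : (Fin 2 → ℝ) → ℝ) (x : Fin 2 → ℝ) : Fin 2 → ℝ :=
  ![pd2 0 γ x, pd2 1 γ x]

/-- Divergence `∇·w` of a vector field on `ℝ²`. -/
noncomputable def div2 (w : (Fin 2 → ℝ) → Fin 2 → ℝ) (x : Fin 2 → ℝ) : ℝ :=
  pd2 0 (fun y => w y 0) x + pd2 1 (fun y => w y 1) x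

/-! ### Auxiliary lemmas -/

section Aux

/-- Separating family of functionals spans the dual. -/
lemma SUPG.span_eq_top_of_sep {V : Type*} [AddCommGroup V] [Module ℝ V]
    [FiniteDimensional ℝ V] (S : Set (Module.Dual ℝ V))
    (hsep : ∀ v : V, (∀ φ ∈ S, φ v = 0) → v = 0) :
    Submodule.span ℝ S = ⊤ := by
  have h1 : (Submodule.span ℝ S).dualCoannihilator = ⊥ := by
    rw [Submodule.eq_bot_iff]
    intro v hv
    rw [Submodule.mem_dualCoannihilator] at hv
    exact hsep v fun φ hφ => hv φ (Submodule.subset_span hφ)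
  have h2 := Subspace.finrank_add_finrank_dualCoannihilator_eq (Submodule.span ℝ S)
  rw [h1] at h2
  simp only [finrank_bot, add_zero] at h2
  apply Submodule.eq_top_of_finrank_eq
  rw [h2, Subspace.dual_finrank_eq]

/-- If a curve in a finite-dimensional space is pointwise differentiable against a
separating family of functionals, it is differentiable against all functionals. -/
lemma SUPG.deriv_all_dual {V : Type*} [AddCommGroup V] [Module ℝ V]
    [FiniteDimensional ℝ V] (S : Set (Module.Dual ℝ V))
    (hsep : ∀ v : V, (∀ φ ∈ S, φ v = 0) → v = 0)
    (c c' : ℝ → V)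
    (hd : ∀ φ ∈ S, ∀ t, HasDerivAt (fun s => φ (c s)) (φ (c' t)) t) :
    ∀ φ : Module.Dual ℝ V, ∀ t, HasDerivAt (fun s => φ (c s)) (φ (c' t)) t := by
  have key : ∀ φ ∈ Submodule.span ℝ S, ∀ t,
      HasDerivAt (fun s => φ (c s)) (φ (c' t)) t := by
    intro φ hφ
    induction hφ using Submodule.span_induction with
    | mem x hx => exact hd x hx
    | zero => intro t; simpa using hasDerivAt_const t (0 : ℝ)
    | add x y hx hy ihx ihy => intro t; simpa using (ihx t).fun_add (ihy t)
    | smul a x hx ih => intro t; simpa [smul_eq_mul] using (ih t).const_mul a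
  intro φ t
  exact key φ (by rw [SUPG.span_eq_top_of_sep S hsep]; trivial) t

/-- Derivative of a quadratic form along a weakly differentiable curve. -/
lemma SUPG.deriv_bilinear {V : Type*} [AddCommGroup V] [Module ℝ V]
    [FiniteDimensional ℝ V]
    (c c' : ℝ → V)
    (hall : ∀ φ : Module.Dual ℝ V, ∀ t, HasDerivAt (fun s => φ (c s)) (φ (c' t)) t)
    (Φ : V →ₗ[ℝ] V →ₗ[ℝ] ℝ) (t : ℝ) :
    HasDerivAt (fun s => Φ (c s) (c s)) (Φ (c' t) (c t) + Φ (c t) (c' t)) t := by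
  classical
  set b := Module.finBasis ℝ V with hb
  set n := Module.finrank ℝ V
  have hexp : ∀ v w : V, Φ v w = ∑ i : Fin n, ∑ j : Fin n,
      (b.repr v i) * (b.repr w j) * Φ (b i) (b j) := by
    intro v w
    conv_lhs => rw [← b.sum_repr v, ← b.sum_repr w]
    simp only [map_sum, LinearMap.coe_sum, Finset.sum_apply]
    rw [Finset.sum_comm]
    apply Finset.sum_congr rfl
    intro i _
    apply Finset.sum_congr rfl
    intro j _
    simp only [LinearMap.map_smul, LinearMap.smul_apply, smul_eq_mul]
    ring
  have hr : ∀ (i : Fin n) (t : ℝ),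
      HasDerivAt (fun s => b.repr (c s) i) (b.repr (c' t) i) t := by
    intro i t
    exact hall (b.coord i) t
  have h1 : HasDerivAt (fun s => ∑ i : Fin n, ∑ j : Fin n,
      (b.repr (c s) i) * (b.repr (c s) j) * Φ (b i) (b j))
      (∑ i : Fin n, ∑ j : Fin n,
        ((b.repr (c' t) i) * (b.repr (c t) j)
          + (b.repr (c t) i) * (b.repr (c' t) j)) * Φ (b i) (b j)) t := by
    apply HasDerivAt.fun_sum
    intro i _
    apply HasDerivAt.fun_sum
    intro j _
    exact ((hr i t).mul (hr j t)).mul_const _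
  have heq : (fun s => Φ (c s) (c s)) = fun s => ∑ i : Fin n, ∑ j : Fin n,
      (b.repr (c s) i) * (b.repr (c s) j) * Φ (b i) (b j) := by
    funext s; exact hexp _ _
  rw [heq]
  convert h1 using 1
  rw [hexp (c' t) (c t), hexp (c t) (c' t), ← Finset.sum_add_distrib]
  apply Finset.sum_congr rfl
  intro i _
  rw [← Finset.sum_add_distrib]
  apply Finset.sum_congr rfl
  intro j _
  ring

lemma SUPG.pd2_coord_eq (F : (Fin 2 → ℝ) → (Fin 2 → ℝ)) (hF : Differentiable ℝ F)
    (i j : Fin 2) (x : Fin 2 → ℝ) :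
    pd2 j (fun y => F y i) x = fderiv ℝ F x (Pi.single j 1) i := by
  have h : HasFDerivAt (fun y => F y i)
      ((ContinuousLinearMap.proj i).comp (fderiv ℝ F x)) x := by
    exact ((ContinuousLinearMap.proj (R := ℝ) (φ := fun _ : Fin 2 => ℝ)
      i).hasFDerivAt).comp x (hF x).hasFDerivAt
  rw [pd2, h.fderiv]
  rfl

/-- The integral of the divergence of a smooth compactly supported vector field
on `ℝ²` vanishes. -/
lemma SUPG.integral_div2_eq_zero (F : (Fin 2 → ℝ) → (Fin 2 → ℝ))
    (hF : ContDiff ℝ (⊤ : ℕ∞) F) (hsupp : HasCompactSupport F) :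
    ∫ x, div2 F x = 0 := by
  obtain ⟨R, hR⟩ := hsupp.isBounded.subset_closedBall 0
  set r : ℝ := |R| + 1 with hr
  set a : Fin 2 → ℝ := fun _ => -r with ha
  set b : Fin 2 → ℝ := fun _ => r with hb
  have hdiff : Differentiable ℝ F := hF.differentiable (by simp)
  have hle : a ≤ b := fun i => by
    simp only [ha, hb, hr]
    have := abs_nonneg R; linarith
  have hout : ∀ x : Fin 2 → ℝ, (∃ i, r ≤ |x i|) → x ∉ tsupport F := by
    intro x ⟨i, hi⟩ hx
    have h1 : ‖x‖ ≤ R := by simpa [dist_zero_right] using hR hx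
    have h2 : |x i| ≤ ‖x‖ := by
      simpa [Real.norm_eq_abs] using norm_le_pi_norm x i
    have := abs_nonneg R
    have : R ≤ |R| := le_abs_self R
    linarith
  have key := MeasureTheory.integral_divergence_of_hasFDerivAt_off_countable
    (n := 1) a b hle F (fderiv ℝ F) ∅ Set.countable_empty
    (hF.continuous.continuousOn)
    (fun x _ => (hdiff x).hasFDerivAt)
    (by
      apply ContinuousOn.integrableOn_compact isCompact_Icc
      apply Continuous.continuousOn
      apply continuous_finset_sum
      intro i _
      exact (continuous_apply (i : Fin 2)).comp
        ((ContinuousLinearMap.apply ℝ (Fin 2 → ℝ) (Pi.single i 1)).continuous.comp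
          (hF.continuous_fderiv (by simp))))
  have hface : ∀ (i : Fin 2) (c : ℝ), |c| = r →
      ∀ y : Fin 1 → ℝ, F (Fin.insertNth i c y) i = 0 := by
    intro i c hc y
    have : Fin.insertNth i c y ∉ tsupport F := by
      apply hout
      exact ⟨i, by rw [Fin.insertNth_apply_same, hc]⟩
    exact congrFun (image_eq_zero_of_notMem_tsupport this) i
  rw [Finset.sum_eq_zero (by
    intro i _
    have h1 : ∀ y ∈ Set.Icc (a ∘ i.succAbove) (b ∘ i.succAbove),
        F (Fin.insertNth i (b i) y) i = 0 := fun y _ =>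
      hface i (b i) (by simp [hb, hr]; positivity) y
    have h2 : ∀ y ∈ Set.Icc (a ∘ i.succAbove) (b ∘ i.succAbove),
        F (Fin.insertNth i (a i) y) i = 0 := fun y _ =>
      hface i (a i) (by
        simp only [ha, hr]
        rw [abs_of_nonpos (by nlinarith [abs_nonneg R])]
        ring) y
    rw [setIntegral_congr_fun measurableSet_Icc h1,
        setIntegral_congr_fun measurableSet_Icc h2]
    simp)] at key
  have hdiv_eq : ∀ x, div2 F x = ∑ i : Fin 2, fderiv ℝ F x (Pi.single i 1) i := by
    intro x
    rw [div2, SUPG.pd2_coord_eq F hdiff 0 0, SUPG.pd2_coord_eq F hdiff 1 1,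
      Fin.sum_univ_two]
  have hIccsub : ∀ x : Fin 2 → ℝ, x ∉ Set.Icc a b → div2 F x = 0 := by
    intro x hx
    have hxt : x ∉ tsupport F := by
      apply hout
      rw [Set.mem_Icc] at hx
      by_contra hcon
      push_neg at hcon
      apply hx
      constructor <;> intro i <;> have := hcon i <;> rw [abs_lt] at this <;>
        [exact le_of_lt this.1; exact le_of_lt this.2]
    rw [hdiv_eq]
    have : fderiv ℝ F x = 0 := by
      by_contra hne
      exact hxt (support_fderiv_subset ℝ (Function.mem_support.mpr hne))
    simp [this]
  calc ∫ x, div2 F x = ∫ x in Set.Icc a b, div2 F x :=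
        (setIntegral_eq_integral_of_forall_compl_eq_zero hIccsub).symm
    _ = ∫ x in Set.Icc a b, ∑ i : Fin 2, fderiv ℝ F x (Pi.single i 1) i := by
        apply setIntegral_congr_fun measurableSet_Icc
        intro x _; exact hdiv_eq x
    _ = 0 := key

lemma SUPG.dot2_perp_self (a : Fin 2 → ℝ) : dot2 a (perp2 a) = 0 := by
  simp [dot2, perp2]; ring

lemma SUPG.dot2_gradPerp_perp (γ : (Fin 2 → ℝ) → ℝ) (x a : Fin 2 → ℝ) :
    dot2 (gradPerp2 γ x) (perp2 a) = dot2 a (grad2 γ x) := by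
  simp [dot2, perp2, gradPerp2, grad2]; ring

lemma SUPG.dot2_comm (a b : Fin 2 → ℝ) : dot2 a b = dot2 b a := by
  simp [dot2]; ring

lemma SUPG.pd2_pd2_comm (γ : (Fin 2 → ℝ) → ℝ) (hγ : ContDiff ℝ (⊤ : ℕ∞) γ)
    (i j : Fin 2) (x : Fin 2 → ℝ) :
    pd2 i (fun y => pd2 j γ y) x = pd2 j (fun y => pd2 i γ y) x := by
  have hd : Differentiable ℝ γ := hγ.differentiable (by simp)
  have hd1 : Differentiable ℝ (fderiv ℝ γ) :=
    ((contDiff_infty_iff_fderiv.mp hγ).2).differentiable (by simp)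
  have hkey : ∀ (v w : Fin 2 → ℝ),
      fderiv ℝ (fun y => fderiv ℝ γ y w) x v = fderiv ℝ (fderiv ℝ γ) x v w := by
    intro v w
    have h : HasFDerivAt (fun y => fderiv ℝ γ y w)
        ((ContinuousLinearMap.apply ℝ ℝ w).comp (fderiv ℝ (fderiv ℝ γ) x)) x :=
      (ContinuousLinearMap.apply ℝ ℝ w).hasFDerivAt.comp x (hd1 x).hasFDerivAt
    rw [h.fderiv]; rfl
  have hsym := second_derivative_symmetric (f := γ) (f' := fderiv ℝ γ)
    (f'' := fderiv ℝ (fderiv ℝ γ) x)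
    (fun y => (hd y).hasFDerivAt) (hd1 x).hasFDerivAt
  simp only [pd2]
  rw [hkey, hkey, hsym]

lemma SUPG.div2_gradPerp (γ : (Fin 2 → ℝ) → ℝ) (hγ : ContDiff ℝ (⊤ : ℕ∞) γ)
    (x : Fin 2 → ℝ) : div2 (gradPerp2 γ) x = 0 := by
  have h0 : (fun y => gradPerp2 γ y 0) = fun y => -(pd2 1 γ y) := by
    funext y; simp [gradPerp2]
  have h1 : (fun y => gradPerp2 γ y 1) = fun y => pd2 0 γ y := by
    funext y; simp [gradPerp2]
  rw [div2, h0, h1]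
  have hneg : pd2 0 (fun y => -(pd2 1 γ y)) x = -(pd2 0 (fun y => pd2 1 γ y) x) := by
    simp only [pd2]
    rw [fderiv_fun_neg]
    rfl
  rw [hneg, SUPG.pd2_pd2_comm γ hγ 0 1]
  ring

lemma SUPG.pd2_mul (f g : (Fin 2 → ℝ) → ℝ) (x : Fin 2 → ℝ)
    (hf : DifferentiableAt ℝ f x) (hg : DifferentiableAt ℝ g x) (j : Fin 2) :
    pd2 j (fun y => f y * g y) x = f x * pd2 j g x + g x * pd2 j f x := by
  simp only [pd2]
  rw [fderiv_fun_mul hf hg]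
  simp [smul_eq_mul]

lemma SUPG.pd2_const_mul (c : ℝ) (f : (Fin 2 → ℝ) → ℝ) (x : Fin 2 → ℝ)
    (hf : DifferentiableAt ℝ f x) (j : Fin 2) :
    pd2 j (fun y => c * f y) x = c * pd2 j f x := by
  simp only [pd2]
  rw [fderiv_const_mul hf]
  simp [smul_eq_mul]

/-- Integration by parts: the advection term against a divergence-free field
integrates to zero. -/
lemma SUPG.integral_mul_advect_zero (γ : (Fin 2 → ℝ) → ℝ)
    (U : (Fin 2 → ℝ) → Fin 2 → ℝ)
    (hγ : ContDiff ℝ (⊤ : ℕ∞) γ) (hU : ContDiff ℝ (⊤ : ℕ∞) U)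
    (hUsupp : HasCompactSupport U) (hdiv : ∀ x, div2 U x = 0) :
    ∫ x, γ x * dot2 (U x) (grad2 γ x) = 0 := by
  have hγd : Differentiable ℝ γ := hγ.differentiable (by simp)
  have hUd : ∀ i, Differentiable ℝ (fun y => U y i) := fun i =>
    ((contDiff_pi.mp hU i).differentiable (by simp))
  set f : (Fin 2 → ℝ) → ℝ := fun y => (1/2 : ℝ) * (γ y * γ y) with hfdef
  have hfd : Differentiable ℝ f := by
    apply Differentiable.const_mul (hγd.mul hγd)
  set G : (Fin 2 → ℝ) → Fin 2 → ℝ := fun y => f y • U y with hGdef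
  have hGc : ContDiff ℝ (⊤ : ℕ∞) G :=
    (contDiff_const.mul (hγ.mul hγ)).smul hU
  have hGsupp : HasCompactSupport G := by
    apply hUsupp.mono
    intro x hx
    simp only [Function.mem_support, hGdef] at hx ⊢
    intro h0
    exact hx (by rw [h0, smul_zero])
  have hpt : ∀ x, div2 G x = γ x * dot2 (U x) (grad2 γ x) + f x * div2 U x := by
    intro x
    have hGi : ∀ i : Fin 2, (fun y => G y i) = fun y => f y * U y i := by
      intro i; funext y; simp [hGdef, smul_eq_mul]
    have hpdf : ∀ j : Fin 2, pd2 j f x = γ x * pd2 j γ x := by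
      intro j
      rw [hfdef]
      rw [SUPG.pd2_const_mul _ _ _ ((hγd x).fun_mul (hγd x)) j,
        SUPG.pd2_mul γ γ x (hγd x) (hγd x) j]
      ring
    simp only [div2, hGi]
    rw [SUPG.pd2_mul f _ x (hfd x) ((hUd 0) x) 0,
      SUPG.pd2_mul f _ x (hfd x) ((hUd 1) x) 1, hpdf 0, hpdf 1]
    simp only [dot2, grad2]
    simp [Matrix.cons_val_zero, Matrix.cons_val_one]
    ring
  have heq : (fun x => γ x * dot2 (U x) (grad2 γ x)) = fun x => div2 G x := by
    funext x
    rw [hpt x, hdiv x]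
    ring
  rw [heq, SUPG.integral_div2_eq_zero G hGc hGsupp]

lemma SUPG.cont_pd2 (γ : (Fin 2 → ℝ) → ℝ) (hγ : ContDiff ℝ (⊤ : ℕ∞) γ) (i : Fin 2) :
    Continuous (pd2 i γ) := by
  have := (ContinuousLinearMap.apply ℝ ℝ (Pi.single i (1:ℝ))).continuous.comp
    (hγ.continuous_fderiv (by simp))
  exact this

lemma SUPG.hcs_pd2 (γ : (Fin 2 → ℝ) → ℝ) (hs : HasCompactSupport γ) (i : Fin 2) :
    HasCompactSupport (pd2 i γ) := by
  have h1 : HasCompactSupport (fderiv ℝ γ) := hs.fderiv ℝ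
  have := h1.comp_left (g := fun L : (Fin 2 → ℝ) →L[ℝ] ℝ => L (Pi.single i 1))
    (by simp)
  exact this

lemma SUPG.cont_dot2_grad (U : (Fin 2 → ℝ) → Fin 2 → ℝ) (γ : (Fin 2 → ℝ) → ℝ)
    (hU : Continuous U) (hγ : ContDiff ℝ (⊤ : ℕ∞) γ) :
    Continuous (fun x => dot2 (U x) (grad2 γ x)) := by
  have h : ∀ x, dot2 (U x) (grad2 γ x)
      = U x 0 * pd2 0 γ x + U x 1 * pd2 1 γ x := by
    intro x; simp [dot2, grad2]
  simp only [h]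
  exact (((continuous_apply 0).comp hU).mul (SUPG.cont_pd2 γ hγ 0)).add
    (((continuous_apply 1).comp hU).mul (SUPG.cont_pd2 γ hγ 1))

lemma SUPG.hcs_dot2_left (U W : (Fin 2 → ℝ) → Fin 2 → ℝ)
    (hs : HasCompactSupport U) :
    HasCompactSupport (fun x => dot2 (U x) (W x)) := by
  apply hs.mono
  intro x hx
  simp only [Function.mem_support] at hx ⊢
  intro h0
  apply hx
  have h00 : U x 0 = 0 := by rw [h0]; rfl
  have h01 : U x 1 = 0 := by rw [h0]; rfl
  simp [dot2, h00, h01]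

end Aux


/-- The `L²` pairing on a space of scalar functions. -/
noncomputable def SUPG.pair0 (V₀ : Submodule ℝ ((Fin 2 → ℝ) → ℝ))
    (h : ∀ γ δ : ↥V₀, Integrable
      (fun x => (γ : (Fin 2 → ℝ) → ℝ) x * (δ : (Fin 2 → ℝ) → ℝ) x)) :
    ↥V₀ →ₗ[ℝ] ↥V₀ →ₗ[ℝ] ℝ :=
  LinearMap.mk₂ ℝ
    (fun γ δ => ∫ x, (γ : (Fin 2 → ℝ) → ℝ) x * (δ : (Fin 2 → ℝ) → ℝ) x)
    (fun γ₁ γ₂ δ => by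
      simp only [Submodule.coe_add, Pi.add_apply, add_mul]
      exact integral_add (h γ₁ δ) (h γ₂ δ))
    (fun c γ δ => by
      simp only [Submodule.coe_smul, Pi.smul_apply, smul_eq_mul, mul_assoc]
      exact integral_const_mul c _)
    (fun γ δ₁ δ₂ => by
      simp only [Submodule.coe_add, Pi.add_apply, mul_add]
      exact integral_add (h γ δ₁) (h γ δ₂))
    (fun c γ δ => by
      simp only [Submodule.coe_smul, Pi.smul_apply, smul_eq_mul]
      simp_rw [mul_left_comm]
      exact integral_const_mul c _)

/-- The `L²` pairing on a space of vector fields. -/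
noncomputable def SUPG.pair1 (V₁ : Submodule ℝ ((Fin 2 → ℝ) → Fin 2 → ℝ))
    (h : ∀ v w : ↥V₁, Integrable
      (fun x => dot2 ((v : (Fin 2 → ℝ) → Fin 2 → ℝ) x)
        ((w : (Fin 2 → ℝ) → Fin 2 → ℝ) x))) :
    ↥V₁ →ₗ[ℝ] ↥V₁ →ₗ[ℝ] ℝ :=
  LinearMap.mk₂ ℝ
    (fun v w => ∫ x, dot2 ((v : (Fin 2 → ℝ) → Fin 2 → ℝ) x)
      ((w : (Fin 2 → ℝ) → Fin 2 → ℝ) x))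
    (fun v₁ v₂ w => by
      have : ∀ x, dot2 (((v₁ + v₂ : ↥V₁) : (Fin 2 → ℝ) → Fin 2 → ℝ) x)
          ((w : (Fin 2 → ℝ) → Fin 2 → ℝ) x)
          = dot2 ((v₁ : (Fin 2 → ℝ) → Fin 2 → ℝ) x) ((w : (Fin 2 → ℝ) → Fin 2 → ℝ) x)
            + dot2 ((v₂ : (Fin 2 → ℝ) → Fin 2 → ℝ) x) ((w : (Fin 2 → ℝ) → Fin 2 → ℝ) x) := by
        intro x; simp [dot2]; ring
      simp_rw [this]
      exact integral_add (h v₁ w) (h v₂ w))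
    (fun c v w => by
      have : ∀ x, dot2 (((c • v : ↥V₁) : (Fin 2 → ℝ) → Fin 2 → ℝ) x)
          ((w : (Fin 2 → ℝ) → Fin 2 → ℝ) x)
          = c * dot2 ((v : (Fin 2 → ℝ) → Fin 2 → ℝ) x) ((w : (Fin 2 → ℝ) → Fin 2 → ℝ) x) := by
        intro x; simp [dot2]; ring
      simp_rw [this, smul_eq_mul]
      exact integral_const_mul c _)
    (fun v w₁ w₂ => by
      have : ∀ x, dot2 ((v : (Fin 2 → ℝ) → Fin 2 → ℝ) x)
          (((w₁ + w₂ : ↥V₁) : (Fin 2 → ℝ) → Fin 2 → ℝ) x)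
          = dot2 ((v : (Fin 2 → ℝ) → Fin 2 → ℝ) x) ((w₁ : (Fin 2 → ℝ) → Fin 2 → ℝ) x)
            + dot2 ((v : (Fin 2 → ℝ) → Fin 2 → ℝ) x) ((w₂ : (Fin 2 → ℝ) → Fin 2 → ℝ) x) := by
        intro x; simp [dot2]; ring
      simp_rw [this]
      exact integral_add (h v w₁) (h v w₂))
    (fun c v w => by
      have : ∀ x, dot2 ((v : (Fin 2 → ℝ) → Fin 2 → ℝ) x)
          (((c • w : ↥V₁) : (Fin 2 → ℝ) → Fin 2 → ℝ) x)
          = c * dot2 ((v : (Fin 2 → ℝ) → Fin 2 → ℝ) x) ((w : (Fin 2 → ℝ) → Fin 2 → ℝ) x) := by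
        intro x; simp [dot2]; ring
      simp_rw [this, smul_eq_mul]
      exact integral_const_mul c _)


/-- **SUPG-stabilised vorticity scheme: energy conservation and enstrophy
budget.**  For the scheme with momentum equation
`⟨w, ∂u/∂t⟩ + ∫ (ω − τ(∂ω/∂t + u·∇ω))(w·u^⊥) dx = 0` for all divergence-free
`w ∈ V₁`, the energy `∫ |u(t)|² dx` is constant in `t`, while the enstrophy
satisfies `d/dt ∫ ½ω² dx = −τ ∫ (∂ω/∂t)(u·∇ω) dx − τ ∫ (u·∇ω)² dx`. -/
theorem supg_vorticity_energy_and_enstrophy_budget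
    (V₀ : Submodule ℝ ((Fin 2 → ℝ) → ℝ))
    (V₁ : Submodule ℝ ((Fin 2 → ℝ) → Fin 2 → ℝ))
    [FiniteDimensional ℝ V₀] [FiniteDimensional ℝ V₁]
    (hV₀ : ∀ γ ∈ V₀, ContDiff ℝ (⊤ : ℕ∞) γ ∧ HasCompactSupport γ)
    (hV₁ : ∀ w ∈ V₁, ContDiff ℝ (⊤ : ℕ∞) w ∧ HasCompactSupport w)
    (hcurl : ∀ γ ∈ V₀, gradPerp2 γ ∈ V₁)
    (τ : ℝ)
    (u u' : ℝ → (Fin 2 → ℝ) → Fin 2 → ℝ)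
    (hu_mem : ∀ t, u t ∈ V₁) (hu'_mem : ∀ t, u' t ∈ V₁)
    (hu_deriv : ∀ t x, HasDerivAt (fun s => u s x) (u' t x) t)
    (hu'_cont : ∀ x, Continuous fun t => u' t x)
    (hu_div : ∀ t x, div2 (u t) x = 0)
    (ω ω' : ℝ → (Fin 2 → ℝ) → ℝ)
    (hω_mem : ∀ t, ω t ∈ V₀) (hω'_mem : ∀ t, ω' t ∈ V₀)
    (hω_deriv : ∀ t x, HasDerivAt (fun s => ω s x) (ω' t x) t)
    (hω'_cont : ∀ x, Continuous fun t => ω' t x)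
    (hω_def : ∀ t, ∀ γ ∈ V₀,
      ∫ x, γ x * ω t x = - ∫ x, dot2 (gradPerp2 γ x) (u t x))
    (hmom : ∀ t, ∀ w ∈ V₁, (∀ x, div2 w x = 0) →
      (∫ x, dot2 (w x) (u' t x))
        + (∫ x, (ω t x - τ * (ω' t x + dot2 (u t x) (grad2 (ω t) x)))
              * dot2 (w x) (perp2 (u t x))) = 0) :
    (∀ s t : ℝ, ∫ x, dot2 (u t x) (u t x) = ∫ x, dot2 (u s x) (u s x)) ∧
    (∀ t : ℝ, HasDerivAt (fun s => ∫ x, (1/2 : ℝ) * (ω s x) ^ 2)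
      (- τ * (∫ x, ω' t x * dot2 (u t x) (grad2 (ω t) x))
        - τ * (∫ x, (dot2 (u t x) (grad2 (ω t) x)) ^ 2)) t) := by
  classical
  -- integrability of the pairings
  have hint0 : ∀ γ δ : ↥V₀, Integrable
      (fun x => (γ : (Fin 2 → ℝ) → ℝ) x * (δ : (Fin 2 → ℝ) → ℝ) x) := by
    intro γ δ
    have h1 := hV₀ γ γ.2
    have h2 := hV₀ δ δ.2
    exact Continuous.integrable_of_hasCompactSupport
      (h1.1.continuous.mul h2.1.continuous) h1.2.mul_right
  have hint1 : ∀ v w : ↥V₁, Integrable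
      (fun x => dot2 ((v : (Fin 2 → ℝ) → Fin 2 → ℝ) x)
        ((w : (Fin 2 → ℝ) → Fin 2 → ℝ) x)) := by
    intro v w
    have h1 := hV₁ v v.2
    have h2 := hV₁ w w.2
    refine Continuous.integrable_of_hasCompactSupport ?_
      (SUPG.hcs_dot2_left _ _ h1.2)
    have hv := h1.1.continuous
    have hw := h2.1.continuous
    exact (((continuous_apply 0).comp hv).mul ((continuous_apply 0).comp hw)).add
      (((continuous_apply 1).comp hv).mul ((continuous_apply 1).comp hw))
  set Ω : ℝ → ↥V₀ := fun t => ⟨ω t, hω_mem t⟩ with hΩdef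
  set Ω' : ℝ → ↥V₀ := fun t => ⟨ω' t, hω'_mem t⟩ with hΩ'def
  set C : ℝ → ↥V₁ := fun t => ⟨u t, hu_mem t⟩ with hCdef
  set C' : ℝ → ↥V₁ := fun t => ⟨u' t, hu'_mem t⟩ with hC'def
  set Φ₀ := SUPG.pair0 V₀ hint0 with hΦ₀def
  set Φ₁ := SUPG.pair1 V₁ hint1 with hΦ₁def
  -- weak differentiability of the curves against all functionals
  have hall₀ : ∀ φ : Module.Dual ℝ ↥V₀, ∀ t,
      HasDerivAt (fun s => φ (Ω s)) (φ (Ω' t)) t := by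
    apply SUPG.deriv_all_dual
      (Set.range fun x : Fin 2 → ℝ => (LinearMap.proj x).comp V₀.subtype)
    · intro v h
      apply Subtype.ext
      funext x
      have := h _ ⟨x, rfl⟩
      simpa using this
    · rintro φ ⟨x, rfl⟩ t
      exact hω_deriv t x
  have hall₁ : ∀ φ : Module.Dual ℝ ↥V₁, ∀ t,
      HasDerivAt (fun s => φ (C s)) (φ (C' t)) t := by
    apply SUPG.deriv_all_dual
      (Set.range fun p : (Fin 2 → ℝ) × Fin 2 =>
        (LinearMap.proj p.2).comp ((LinearMap.proj p.1).comp V₁.subtype))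
    · intro v h
      apply Subtype.ext
      funext x i
      have := h _ ⟨(x, i), rfl⟩
      simpa using this
    · rintro φ ⟨p, rfl⟩ t
      exact (hasDerivAt_pi.mp (hu_deriv t p.1)) p.2
  -- energy conservation
  have hEzero : ∀ t, (∫ x, dot2 (u t x) (u' t x)) = 0 := by
    intro t
    have hm := hmom t (u t) (hu_mem t) (hu_div t)
    have hz : (fun x => (ω t x - τ * (ω' t x + dot2 (u t x) (grad2 (ω t) x)))
        * dot2 (u t x) (perp2 (u t x))) = fun _ => (0 : ℝ) := by
      funext x
      rw [SUPG.dot2_perp_self]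
      ring
    rw [hz, integral_zero, add_zero] at hm
    exact hm
  have hEd : ∀ t, HasDerivAt (fun s => ∫ x, dot2 (u s x) (u s x)) 0 t := by
    intro t
    have h : HasDerivAt (fun s => ∫ x, dot2 (u s x) (u s x))
        (Φ₁ (C' t) (C t) + Φ₁ (C t) (C' t)) t :=
      SUPG.deriv_bilinear C C' hall₁ Φ₁ t
    have hv1 : Φ₁ (C' t) (C t) = 0 := by
      have hc : (fun x => dot2 (u' t x) (u t x)) = fun x => dot2 (u t x) (u' t x) := by
        funext x; exact SUPG.dot2_comm _ _
      show (∫ x, dot2 (u' t x) (u t x)) = 0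
      rw [hc]; exact hEzero t
    have hv2 : Φ₁ (C t) (C' t) = 0 := hEzero t
    rw [hv1, hv2, add_zero] at h
    exact h
  constructor
  · intro s t
    exact is_const_of_deriv_eq_zero
      (fun r => (hEd r).differentiableAt) (fun r => (hEd r).deriv) t s
  -- enstrophy budget
  intro t
  have hsmooth_ω := (hV₀ _ (hω_mem t)).1
  have hsupp_ω := (hV₀ _ (hω_mem t)).2
  have hsmooth_u := (hV₁ _ (hu_mem t)).1
  have hsupp_u := (hV₁ _ (hu_mem t)).2
  have contD : Continuous (fun x => dot2 (u t x) (grad2 (ω t) x)) :=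
    SUPG.cont_dot2_grad (u t) (ω t) hsmooth_u.continuous hsmooth_ω
  have hcsD : HasCompactSupport (fun x => dot2 (u t x) (grad2 (ω t) x)) :=
    SUPG.hcs_dot2_left (u t) _ hsupp_u
  have intωD : Integrable (fun x => ω t x * dot2 (u t x) (grad2 (ω t) x)) :=
    Continuous.integrable_of_hasCompactSupport
      (hsmooth_ω.continuous.mul contD) hcsD.mul_left
  have intω'D : Integrable (fun x => ω' t x * dot2 (u t x) (grad2 (ω t) x)) :=
    Continuous.integrable_of_hasCompactSupport
      ((hV₀ _ (hω'_mem t)).1.continuous.mul contD) hcsD.mul_left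
  have intD2 : Integrable (fun x => dot2 (u t x) (grad2 (ω t) x) ^ 2) := by
    refine Continuous.integrable_of_hasCompactSupport (contD.pow 2) ?_
    apply hcsD.mono
    intro x hx
    simp only [Function.mem_support] at hx ⊢
    intro h0
    exact hx (by rw [h0]; ring)
  set W : ↥V₁ := ⟨gradPerp2 (ω t), hcurl _ (hω_mem t)⟩ with hWdef
  -- differentiate the vorticity relation
  have h₁ : HasDerivAt (fun s => Φ₀ (Ω t) (Ω s)) (Φ₀ (Ω t) (Ω' t)) t :=
    hall₀ (Φ₀ (Ω t)) t
  have h₂ : HasDerivAt (fun s => -(Φ₁ W (C s))) (-(Φ₁ W (C' t))) t :=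
    (hall₁ (Φ₁ W) t).neg
  have heq : (fun s => Φ₀ (Ω t) (Ω s)) = fun s => -(Φ₁ W (C s)) := by
    funext s
    show (∫ x, ω t x * ω s x) = -∫ x, dot2 (gradPerp2 (ω t) x) (u s x)
    exact hω_def s (ω t) (hω_mem t)
  have hE1 : Φ₀ (Ω t) (Ω' t) = -(Φ₁ W (C' t)) := by
    have h₁' : HasDerivAt (fun s => -(Φ₁ W (C s))) (Φ₀ (Ω t) (Ω' t)) t := heq ▸ h₁
    exact h₁'.unique h₂
  -- momentum equation with the curl test function
  have hdivW : ∀ x, div2 (gradPerp2 (ω t)) x = 0 :=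
    SUPG.div2_gradPerp (ω t) hsmooth_ω
  have hm := hmom t (gradPerp2 (ω t)) (hcurl _ (hω_mem t)) hdivW
  simp only [SUPG.dot2_gradPerp_perp] at hm
  have hmW : Φ₁ W (C' t)
      = -∫ x, (ω t x - τ * (ω' t x + dot2 (u t x) (grad2 (ω t) x)))
          * dot2 (u t x) (grad2 (ω t) x) := by
    show (∫ x, dot2 (gradPerp2 (ω t) x) (u' t x)) = _
    linarith [hm]
  have hIq : Φ₀ (Ω t) (Ω' t)
      = ∫ x, (ω t x - τ * (ω' t x + dot2 (u t x) (grad2 (ω t) x)))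
          * dot2 (u t x) (grad2 (ω t) x) := by
    rw [hE1, hmW, neg_neg]
  have hsplit : (∫ x, (ω t x - τ * (ω' t x + dot2 (u t x) (grad2 (ω t) x)))
        * dot2 (u t x) (grad2 (ω t) x))
      = (∫ x, ω t x * dot2 (u t x) (grad2 (ω t) x))
        - (τ * (∫ x, ω' t x * dot2 (u t x) (grad2 (ω t) x))
          + τ * (∫ x, dot2 (u t x) (grad2 (ω t) x) ^ 2)) := by
    have hfn : (fun x => (ω t x - τ * (ω' t x + dot2 (u t x) (grad2 (ω t) x)))
          * dot2 (u t x) (grad2 (ω t) x))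
        = fun x => ω t x * dot2 (u t x) (grad2 (ω t) x)
          - (τ * (ω' t x * dot2 (u t x) (grad2 (ω t) x))
            + τ * (dot2 (u t x) (grad2 (ω t) x) ^ 2)) := by
      funext x; ring
    have intA : Integrable (fun x => τ * (ω' t x * dot2 (u t x) (grad2 (ω t) x))) :=
      intω'D.const_mul τ
    have intB : Integrable (fun x => τ * (dot2 (u t x) (grad2 (ω t) x) ^ 2)) :=
      intD2.const_mul τ
    have intAB : Integrable (fun x => τ * (ω' t x * dot2 (u t x) (grad2 (ω t) x))
        + τ * (dot2 (u t x) (grad2 (ω t) x) ^ 2)) := intA.add intB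
    rw [hfn, integral_sub intωD intAB, integral_add intA intB,
      integral_const_mul τ, integral_const_mul τ]
  have hIBP : (∫ x, ω t x * dot2 (u t x) (grad2 (ω t) x)) = 0 :=
    SUPG.integral_mul_advect_zero (ω t) (u t) hsmooth_ω hsmooth_u hsupp_u (hu_div t)
  -- assemble the enstrophy derivative
  have hBB : HasDerivAt (fun s => (1/2 : ℝ) * (Φ₀ (Ω s) (Ω s)))
      ((1/2 : ℝ) * (Φ₀ (Ω' t) (Ω t) + Φ₀ (Ω t) (Ω' t))) t :=
    (SUPG.deriv_bilinear Ω Ω' hall₀ Φ₀ t).const_mul (1/2 : ℝ)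
  have hfun2 : (fun s => ∫ x, (1/2 : ℝ) * (ω s x) ^ 2)
      = fun s => (1/2 : ℝ) * (Φ₀ (Ω s) (Ω s)) := by
    funext s
    have h1 : (fun x => (1/2 : ℝ) * (ω s x) ^ 2)
        = fun x => (1/2 : ℝ) * (ω s x * ω s x) := by
      funext x; ring
    rw [h1, integral_const_mul]
    rfl
  have hsym : Φ₀ (Ω' t) (Ω t) = Φ₀ (Ω t) (Ω' t) := by
    show (∫ x, ω' t x * ω t x) = ∫ x, ω t x * ω' t x
    congr 1
    funext x
    ring
  have hval : (1/2 : ℝ) * (Φ₀ (Ω' t) (Ω t) + Φ₀ (Ω t) (Ω' t))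
      = - τ * (∫ x, ω' t x * dot2 (u t x) (grad2 (ω t) x))
        - τ * (∫ x, (dot2 (u t x) (grad2 (ω t) x)) ^ 2) := by
    rw [hsym, hIq, hsplit, hIBP]
    ring
  rw [hfun2, ← hval]
  exact hBB
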